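/- arXiv:1008.3734 — 2 statements merged into one kernel-verified Lean document; each statement's English description precedes it below -/
import Mathlib

section
/- Let a, b, c be nonnegative real numbers with a+b ≤ π, b+c ≤ π and a+c ≤ π. Then cos²a + cos²b + cos²c + 2·cos a·cos b·cos c < 1 if and only if a + b + c > π. -/
open Real

lemma phi_factor (a b c : ℝ) :
    Real.cos a ^ 2 + Real.cos b ^ 2 + Real.cos c ^ 2
      + 2 * Real.cos a * Real.cos b * Real.cos c - 1 =
    (2 * Real.cos ((a + b + c) / 2) * Real.cos ((a - b - c) / 2)) *
    (2 * Real.cos ((a + b - c) / 2) * Real.cos ((a - b + c) / 2)) := by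
  have h1 := Real.cos_add_cos a (b + c)
  have h2 := Real.cos_add_cos a (b - c)
  have hbc := Real.cos_add b c
  have hbc' := Real.cos_sub b c
  have sb := Real.sin_sq_add_cos_sq b
  have sc := Real.sin_sq_add_cos_sq c
  have e1 : (a + (b + c)) / 2 = (a + b + c) / 2 := by ring
  have e2 : (a - (b + c)) / 2 = (a - b - c) / 2 := by ring
  have e3 : (a + (b - c)) / 2 = (a + b - c) / 2 := by ring
  have e4 : (a - (b - c)) / 2 = (a - b + c) / 2 := by ring
  rw [e1, e2] at h1
  rw [e3, e4] at h2
  rw [← h1, ← h2, hbc, hbc']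
  nlinarith [sb, sc]

theorem irreducibility_iff_angle_sum_gt_pi (a b c : ℝ)
    (ha : 0 ≤ a) (hb : 0 ≤ b) (hc : 0 ≤ c)
    (hab : a + b ≤ Real.pi) (hbc : b + c ≤ Real.pi) (hac : a + c ≤ Real.pi) :
    Real.cos a ^ 2 + Real.cos b ^ 2 + Real.cos c ^ 2
      + 2 * Real.cos a * Real.cos b * Real.cos c < 1 ↔
    a + b + c > Real.pi := by
  have key := phi_factor a b c
  have hpi := Real.pi_pos
  constructor
  · intro h
    by_contra hle
    push_neg at hle
    -- then all four cosines nonneg, product nonneg, contradiction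
    have h1 : 0 ≤ Real.cos ((a + b + c) / 2) := by
      apply Real.cos_nonneg_of_mem_Icc
      constructor <;> [linarith; linarith]
    have h2 : 0 ≤ Real.cos ((a - b - c) / 2) := by
      apply Real.cos_nonneg_of_mem_Icc
      constructor <;> [linarith; linarith]
    have h3 : 0 ≤ Real.cos ((a + b - c) / 2) := by
      apply Real.cos_nonneg_of_mem_Icc
      have : c ≤ Real.pi := by linarith
      constructor <;> [linarith; linarith]
    have h4 : 0 ≤ Real.cos ((a - b + c) / 2) := by
      apply Real.cos_nonneg_of_mem_Icc
      have : b ≤ Real.pi := by linarith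
      constructor <;> [linarith; linarith]
    nlinarith [mul_nonneg h1 h2, mul_nonneg h3 h4,
      mul_nonneg (mul_nonneg h1 h2) (mul_nonneg h3 h4)]
  · intro h
    have h1 : Real.cos ((a + b + c) / 2) < 0 := by
      apply Real.cos_neg_of_pi_div_two_lt_of_lt <;> linarith
    have hc0 : 0 < c := by linarith
    have hb0 : 0 < b := by linarith
    have ha0 : 0 < a := by linarith
    have h2 : 0 < Real.cos ((a - b - c) / 2) :=
      Real.cos_pos_of_mem_Ioo ⟨by linarith, by linarith⟩
    have h3 : 0 < Real.cos ((a + b - c) / 2) :=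
      Real.cos_pos_of_mem_Ioo ⟨by linarith, by linarith⟩
    have h4 : 0 < Real.cos ((a - b + c) / 2) :=
      Real.cos_pos_of_mem_Ioo ⟨by linarith, by linarith⟩
    have p1 : 2 * Real.cos ((a + b + c) / 2) * Real.cos ((a - b - c) / 2) < 0 := by
      have := mul_neg_of_neg_of_pos h1 h2; linarith
    have p2 : 0 < 2 * Real.cos ((a + b - c) / 2) * Real.cos ((a - b + c) / 2) := by
      have := mul_pos h3 h4; linarith
    have := mul_neg_of_neg_of_pos p1 p2
    linarith
end

section
/- Let B₁, B₂, B₃ be positive real numbers, let B̂₁, B̂₂, B̂₃ ∈ [0, π] satisfy cos B̂ⱼ = cos Bⱼ for j = 1, 2, 3 and B̂₁ ≤ B̂₂ ≤ B̂₃. Define B'₁ = B̂₁, and for j = 2, 3 define B'ⱼ = B̂ⱼ if B̂₂ + B̂₃ ≤ π and B'ⱼ = π − B̂ⱼ if B̂₂ + B̂₃ > π. Then cos²B₁ + cos²B₂ + cos²B₃ + 2·cos B₁·cos B₂·cos B₃ < 1 if and only if B'₁ + B'₂ + B'₃ > π. -/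
/-!
With half-angles `x, y, z` such that `(a, b, c) = (y + z, x + z, x + y)`, one has
`phi a b c - 1 = 4 cos (x + y + z) cos x cos y cos z`, and a sign analysis of the four factors shows
that for `a, b, c ∈ [0, π]` this is negative exactly when `a + b + c > π` and the sum of any two
of `a, b, c` is less than `π` plus the third. Since `phi` is unchanged when two angles are replaced
by their supplements, the normalization `B̂ ↦ B'` preserves it, and for the normalized triple these
inequalities collapse to `B'₁ + B'₂ + B'₃ > π`.
-/

open Real Set

noncomputable def phi (a b c : ℝ) : ℝ :=
  cos a ^ 2 + cos b ^ 2 + cos c ^ 2 + 2 * cos a * cos b * cos c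

theorem phi_pi_sub_pi_sub (a b c : ℝ) : phi a (π - b) (π - c) = phi a b c := by
  simp only [phi, cos_pi_sub]
  ring

theorem phi_add_add_sub_one (x y z : ℝ) :
    phi (y + z) (x + z) (x + y) - 1 = 4 * cos (x + y + z) * cos x * cos y * cos z := by
  have hyz : cos (y + z) + cos (z - y) = 2 * cos y * cos z := by
    rw [cos_add, cos_sub]; ring
  have hx : cos (y + z) + cos (x + z + (x + y)) = 2 * cos (x + y + z) * cos x := by
    rw [show y + z = x + y + z - x by ring, show x + z + (x + y) = x + y + z + x by ring,
      cos_sub (x + y + z) x, cos_add (x + y + z) x]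
    ring
  have hfactor : phi (y + z) (x + z) (x + y) - 1 =
      (cos (y + z) + cos (x + z + (x + y))) * (cos (y + z) + cos (x + z - (x + y))) := by
    rw [phi, cos_add (x + z), cos_sub (x + z)]
    linear_combination sin (x + y) ^ 2 * sin_sq_add_cos_sq (x + z) +
      (1 - cos (x + z) ^ 2) * sin_sq_add_cos_sq (x + y)
  rw [hfactor, hx, show x + z - (x + y) = z - y by ring, hyz]
  ring

section HalfAngles

variable {x y z : ℝ} (hyz : y + z ∈ Icc 0 π) (hxz : x + z ∈ Icc 0 π) (hxy : x + y ∈ Icc 0 π)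
include hyz hxz hxy

theorem cos_add_add_mul_cos_mul_cos_mul_cos_nonneg_of_pi_div_two_le (hx : π / 2 ≤ x) :
    0 ≤ cos (x + y + z) * cos x * cos y * cos z := by
  obtain ⟨_, _⟩ := hyz
  obtain ⟨_, _⟩ := hxz
  obtain ⟨_, _⟩ := hxy
  have hσ : cos (x + y + z) ≤ 0 := cos_nonpos_of_pi_div_two_le_of_le (by linarith) (by linarith)
  have hcx : cos x ≤ 0 := cos_nonpos_of_pi_div_two_le_of_le hx (by linarith)
  have hcy : 0 ≤ cos y := cos_nonneg_of_mem_Icc ⟨by linarith, by linarith⟩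
  have hcz : 0 ≤ cos z := cos_nonneg_of_mem_Icc ⟨by linarith, by linarith⟩
  exact mul_nonneg (mul_nonneg (mul_nonneg_of_nonpos_of_nonpos hσ hcx) hcy) hcz

theorem cos_add_add_mul_cos_mul_cos_mul_cos_nonneg_of_le_pi_div_two (hσ : x + y + z ≤ π / 2) :
    0 ≤ cos (x + y + z) * cos x * cos y * cos z := by
  obtain ⟨_, _⟩ := hyz
  obtain ⟨_, _⟩ := hxz
  obtain ⟨_, _⟩ := hxy
  have hcσ : 0 ≤ cos (x + y + z) := cos_nonneg_of_mem_Icc ⟨by linarith, hσ.trans (by linarith)⟩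
  have hcx : 0 ≤ cos x := cos_nonneg_of_mem_Icc ⟨by linarith, by linarith⟩
  have hcy : 0 ≤ cos y := cos_nonneg_of_mem_Icc ⟨by linarith, by linarith⟩
  have hcz : 0 ≤ cos z := cos_nonneg_of_mem_Icc ⟨by linarith, by linarith⟩
  exact mul_nonneg (mul_nonneg (mul_nonneg hcσ hcx) hcy) hcz

theorem cos_add_add_mul_cos_mul_cos_mul_cos_neg_iff :
    cos (x + y + z) * cos x * cos y * cos z < 0 ↔
      π / 2 < x + y + z ∧ x < π / 2 ∧ y < π / 2 ∧ z < π / 2 := by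
  have nonneg_x := cos_add_add_mul_cos_mul_cos_mul_cos_nonneg_of_pi_div_two_le hyz hxz hxy
  have nonneg_y (hy : π / 2 ≤ y) : 0 ≤ cos (x + y + z) * cos x * cos y * cos z := by
    convert cos_add_add_mul_cos_mul_cos_mul_cos_nonneg_of_pi_div_two_le hxz hyz
      (add_comm x y ▸ hxy) hy using 1
    ring_nf
  have nonneg_z (hz : π / 2 ≤ z) : 0 ≤ cos (x + y + z) * cos x * cos y * cos z := by
    convert cos_add_add_mul_cos_mul_cos_mul_cos_nonneg_of_pi_div_two_le
      (add_comm y x ▸ hxy) (add_comm z x ▸ hxz) (add_comm z y ▸ hyz) hz using 1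
    ring_nf
  constructor
  · intro hneg
    by_contra! hcond
    rcases le_or_gt (x + y + z) (π / 2) with hσ | hσ
    · linarith [cos_add_add_mul_cos_mul_cos_mul_cos_nonneg_of_le_pi_div_two hyz hxz hxy hσ]
    rcases le_or_gt (π / 2) x with hx | hx
    · linarith [nonneg_x hx]
    rcases le_or_gt (π / 2) y with hy | hy
    · linarith [nonneg_y hy]
    · linarith [nonneg_z (hcond hσ hx hy)]
  · rintro ⟨hσ, hx, hy, hz⟩
    obtain ⟨_, _⟩ := hyz
    obtain ⟨_, _⟩ := hxz
    have hcσ : cos (x + y + z) < 0 := cos_neg_of_pi_div_two_lt_of_lt hσ (by linarith)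
    have hcx : 0 < cos x := cos_pos_of_mem_Ioo ⟨by linarith, hx⟩
    have hcy : 0 < cos y := cos_pos_of_mem_Ioo ⟨by linarith, hy⟩
    have hcz : 0 < cos z := cos_pos_of_mem_Ioo ⟨by linarith, hz⟩
    exact mul_neg_of_neg_of_pos (mul_neg_of_neg_of_pos (mul_neg_of_neg_of_pos hcσ hcx) hcy) hcz

end HalfAngles

theorem phi_lt_one_iff {a b c : ℝ} (ha : a ∈ Icc 0 π) (hb : b ∈ Icc 0 π) (hc : c ∈ Icc 0 π) :
    phi a b c < 1 ↔ π < a + b + c ∧ b + c < π + a ∧ a + c < π + b ∧ a + b < π + c := by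
  obtain ⟨x, y, z, rfl, rfl, rfl⟩ : ∃ x y z, a = y + z ∧ b = x + z ∧ c = x + y :=
    ⟨(b + c - a) / 2, (a + c - b) / 2, (a + b - c) / 2, by ring, by ring, by ring⟩
  have hfactor := phi_add_add_sub_one x y z
  have hsign : phi (y + z) (x + z) (x + y) < 1 ↔ cos (x + y + z) * cos x * cos y * cos z < 0 := by
    constructor <;> intro h <;> linarith
  rw [hsign, cos_add_add_mul_cos_mul_cos_mul_cos_neg_iff ha hb hc]
  constructor <;> rintro ⟨h₁, h₂, h₃, h₄⟩ <;> refine ⟨?_, ?_, ?_, ?_⟩ <;> linarith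

theorem irreducibility_iff_normalized_sum_gt_pi_general (B1 B2 B3 : ℝ)
    (Bh1 Bh2 Bh3 : ℝ)
    (hh1 : Bh1 ∈ Set.Icc 0 Real.pi) (hh2 : Bh2 ∈ Set.Icc 0 Real.pi)
    (hh3 : Bh3 ∈ Set.Icc 0 Real.pi)
    (hc1 : Real.cos Bh1 = Real.cos B1) (hc2 : Real.cos Bh2 = Real.cos B2)
    (hc3 : Real.cos Bh3 = Real.cos B3)
    (hord12 : Bh1 ≤ Bh2) (hord23 : Bh2 ≤ Bh3) :
    let B1' := Bh1
    let B2' := if Bh2 + Bh3 ≤ Real.pi then Bh2 else Real.pi - Bh2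
    let B3' := if Bh2 + Bh3 ≤ Real.pi then Bh3 else Real.pi - Bh3
    (Real.cos B1 ^ 2 + Real.cos B2 ^ 2 + Real.cos B3 ^ 2
      + 2 * Real.cos B1 * Real.cos B2 * Real.cos B3 < 1 ↔
    B1' + B2' + B3' > Real.pi) := by
  dsimp only
  rw [← hc1, ← hc2, ← hc3]
  change phi Bh1 Bh2 Bh3 < 1 ↔ _
  obtain ⟨h1₀, h1π⟩ := hh1
  obtain ⟨h2₀, h2π⟩ := hh2
  obtain ⟨h3₀, h3π⟩ := hh3
  split_ifs with hsum
  · rw [phi_lt_one_iff ⟨h1₀, h1π⟩ ⟨h2₀, h2π⟩ ⟨h3₀, h3π⟩]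
    exact ⟨fun h => h.1, fun h => ⟨h, by linarith, by linarith, by linarith⟩⟩
  · rw [← phi_pi_sub_pi_sub, phi_lt_one_iff ⟨h1₀, h1π⟩ ⟨by linarith, by linarith⟩
      ⟨by linarith, by linarith⟩]
    exact ⟨fun h => by linarith [h.1], fun h => ⟨by linarith, by linarith, by linarith, by linarith⟩⟩

theorem irreducibility_iff_normalized_sum_gt_pi (B1 B2 B3 : ℝ)
    (hB1 : 0 < B1) (hB2 : 0 < B2) (hB3 : 0 < B3)
    (Bh1 Bh2 Bh3 : ℝ)
    (hh1 : Bh1 ∈ Set.Icc 0 Real.pi) (hh2 : Bh2 ∈ Set.Icc 0 Real.pi)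
    (hh3 : Bh3 ∈ Set.Icc 0 Real.pi)
    (hc1 : Real.cos Bh1 = Real.cos B1) (hc2 : Real.cos Bh2 = Real.cos B2)
    (hc3 : Real.cos Bh3 = Real.cos B3)
    (hord12 : Bh1 ≤ Bh2) (hord23 : Bh2 ≤ Bh3) :
    let B1' := Bh1
    let B2' := if Bh2 + Bh3 ≤ Real.pi then Bh2 else Real.pi - Bh2
    let B3' := if Bh2 + Bh3 ≤ Real.pi then Bh3 else Real.pi - Bh3
    (Real.cos B1 ^ 2 + Real.cos B2 ^ 2 + Real.cos B3 ^ 2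
      + 2 * Real.cos B1 * Real.cos B2 * Real.cos B3 < 1 ↔
    B1' + B2' + B3' > Real.pi) :=
  irreducibility_iff_normalized_sum_gt_pi_general B1 B2 B3 Bh1 Bh2 Bh3 hh1 hh2 hh3 hc1 hc2 hc3
    hord12 hord23
end
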